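/- Let η : L → G be a group homomorphism and H a malnormal subgroup of L. If η preserves conjugacy on H (for all x, y ∈ H, η(y) conjugate to η(x) in G implies y conjugate to x in L) and η preserves centralizers on H (C_G(η(x)) = η(C_L(x)) for all x ∈ H), then η(H) is malnormal in G. -/
import Mathlib

/-- A subgroup `H` of `L` is malnormal if `gHg⁻¹ ∩ H = {1}` for all `g ∉ H`. -/
def Malnormal {L : Type*} [Group L] (H : Subgroup L) : Prop :=
  ∀ g : L, g ∉ H → ∀ x ∈ H, g * x * g⁻¹ ∈ H → x = 1

theorem malnormality_preserved {L G : Type*} [Group L] [Group G]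
    (η : L →* G) (H : Subgroup L) (hmal : Malnormal H)
    (hconj : ∀ x ∈ H, ∀ y ∈ H, ∀ g : G, η y = g * η x * g⁻¹ → ∃ l : L, y = l * x * l⁻¹)
    (hcent : ∀ x ∈ H, (Subgroup.centralizer {η x} : Set G) = η '' (Subgroup.centralizer {x})) :
    Malnormal (H.map η) := by
  intro g hg x hx hgx
  obtain ⟨a, ha, rfl⟩ := hx
  obtain ⟨b, hb, hbeq⟩ := hgx
  obtain ⟨l, hl⟩ := hconj a ha b hb g hbeq
  -- η l⁻¹ * g centralizes η a
  have hcomm : (η l)⁻¹ * g ∈ Subgroup.centralizer ({η a} : Set G) := by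
    rw [Subgroup.mem_centralizer_iff]
    intro m hm
    rcases hm with rfl
    have h1 : η b = η l * η a * (η l)⁻¹ := by
      rw [hl]; simp [mul_assoc]
    have h2 : η b = g * η a * g⁻¹ := hbeq
    have : η a * ((η l)⁻¹ * g) = (η l)⁻¹ * g * η a := by
      have := h1.symm.trans h2
      calc η a * ((η l)⁻¹ * g) = (η l)⁻¹ * (η l * η a * (η l)⁻¹) * g := by group
        _ = (η l)⁻¹ * (g * η a * g⁻¹) * g := by rw [this]
        _ = (η l)⁻¹ * g * η a := by group
    exact this
  have himg : (η l)⁻¹ * g ∈ η '' (Subgroup.centralizer ({a} : Set L) : Set L) := by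
    rw [← hcent a ha]; exact hcomm
  obtain ⟨c, hc, hceq⟩ := himg
  have hgη : g = η (l * c) := by rw [map_mul, hceq]; group
  have hlc : l * c ∉ H := by
    intro hmem
    exact hg ⟨l * c, hmem, hgη.symm⟩
  have hca : c * a = a * c := by
    have := Subgroup.mem_centralizer_iff.mp hc a rfl
    exact this.symm
  have hconjH : (l * c) * a * (l * c)⁻¹ ∈ H := by
    have : (l * c) * a * (l * c)⁻¹ = l * a * l⁻¹ := by
      rw [mul_inv_rev]
      calc l * c * a * (c⁻¹ * l⁻¹) = l * (c * a * c⁻¹) * l⁻¹ := by group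
        _ = l * a * l⁻¹ := by rw [hca]; group
    rw [this, ← hl]; exact hb
  have ha1 : a = 1 := hmal (l * c) hlc a ha hconjH
  rw [ha1, map_one]
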